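/- arXiv:2209.04095 — 3 statements merged into one kernel-verified Lean document; each statement's English description precedes it below -/
import Mathlib

section
/- For any function $f\colon\mathbb{R}\to\mathbb{R}$, the limit $D_{\mathcal{C}} f(0) = \lim_{h\to 0}[3f(h) - 5f(0) + 2f(-h)]/h$ exists if and only if $f'(0) = \lim_{h\to 0}[f(h)-f(0)]/h$ exists, and when both exist they are equal. -/
/-! Writing `q h = (f h - f 0) / h`, the generalized quotient is `3 q h - 2 q (-h)`. The map
`q ↦ a q - b (q ∘ neg)` is invertible whenever `a² ≠ b²`, with inverse
`Q ↦ (a Q + b (Q ∘ neg)) / (a² - b²)`, and both maps commute with limits along the punctured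
neighbourhoods of `0`, which are invariant under `h ↦ -h`. -/

open Filter Topology

lemma tendsto_neg_nhdsNE_zero : Tendsto (fun h : ℝ => -h) (𝓝[≠] 0) (𝓝[≠] 0) := by
  simpa using (continuous_neg (G := ℝ)).continuousWithinAt.tendsto_nhdsWithin
    (x := 0) (s := {0}ᶜ) (t := {0}ᶜ) fun _ => neg_ne_zero.2

lemma Filter.Tendsto.comp_neg_nhdsNE_zero {g : ℝ → ℝ} {L : ℝ}
    (hg : Tendsto g (𝓝[≠] 0) (𝓝 L)) : Tendsto (fun h => g (-h)) (𝓝[≠] 0) (𝓝 L) :=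
  hg.comp tendsto_neg_nhdsNE_zero

lemma tendsto_mul_sub_mul_comp_neg_iff {g : ℝ → ℝ} {a b L : ℝ} (hab : a ^ 2 ≠ b ^ 2) :
    Tendsto (fun h => a * g h - b * g (-h)) (𝓝[≠] 0) (𝓝 ((a - b) * L)) ↔
      Tendsto g (𝓝[≠] 0) (𝓝 L) := by
  constructor
  · intro hQ
    have hsum := ((hQ.const_mul a).add (hQ.comp_neg_nhdsNE_zero.const_mul b)).div_const
      (a ^ 2 - b ^ 2)
    have hab' : a ^ 2 - b ^ 2 ≠ 0 := sub_ne_zero.2 hab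
    convert hsum using 2 with h <;> field_simp <;> ring
  · intro hg
    simpa only [sub_mul] using (hg.const_mul a).sub (hg.comp_neg_nhdsNE_zero.const_mul b)

lemma generalized_quotient_eq_slope (f : ℝ → ℝ) (h : ℝ) :
    (3 * f h - 5 * f 0 + 2 * f (-h)) / h = 3 * slope f 0 h - 2 * slope f 0 (-h) := by
  rcases eq_or_ne h 0 with rfl | hh
  · simp
  · simp only [slope_def_field, sub_zero]
    field_simp
    ring

/-- The generalized Riemann derivative `lim [3f(h) - 5f(0) + 2f(-h)]/h` exists iff the
ordinary derivative `f'(0)` exists, with equal values. -/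
theorem stmt_4 (f : ℝ → ℝ) (L : ℝ) :
    Tendsto (fun h : ℝ => (3 * f h - 5 * f 0 + 2 * f (-h)) / h) (nhdsWithin 0 {0}ᶜ) (nhds L) ↔
    Tendsto (fun h : ℝ => (f h - f 0) / h) (nhdsWithin 0 {0}ᶜ) (nhds L) := by
  have hQ : (fun h : ℝ => (3 * f h - 5 * f 0 + 2 * f (-h)) / h) =
      fun h => 3 * slope f 0 h - 2 * slope f 0 (-h) :=
    funext (generalized_quotient_eq_slope f)
  have hq : (fun h : ℝ => (f h - f 0) / h) = slope f 0 :=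
    funext fun h => by rw [slope_def_field, sub_zero]
  have key := tendsto_mul_sub_mul_comp_neg_iff (g := slope f 0) (a := 3) (b := 2) (L := L)
    (by norm_num)
  rw [show (3 : ℝ) - 2 = 1 by norm_num, one_mul] at key
  rwa [hQ, hq]
end

section
/- Let $q, Q$ be reals with $q,Q \notin \{0,1,-1\}$ and $q \neq Q$, and $n \ge 2$. If there is a nonzero real $r$ such that $r\cdot\{0,1,q,\ldots,q^{n-1}\} = \{0,1,Q,\ldots,Q^{n-1}\}$ as sets, then $Q = -q$ or $Q = q^{-1}$ or $Q = -q^{-1}$. -/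
/-!
Taking `log |·|` (which is what `Real.log` computes on nonzero reals) turns the node sets into
arithmetic progressions: with `m = n - 1`, the equality `r • {q^i} = {Q^j}` matches the extreme
nodes `1, Q^m` with some `r q^a, r q^b` and `r, r q^m` with some `Q^d, Q^c`, which gives `(b - a) log|q| = m log|Q|` and `m log|q| = (c - d) log|Q|`. Since all
index differences are at most `m` in absolute value, the first equation forces `|log|Q|| ≤ |log|q||`
and the second the reverse, so `|Q| = |q|^{±1}`.
-/

open Set

theorem Set.image_eq_of_image_insert_eq_insert {α β : Type*} {f : α → β} (hf : Function.Injective f)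
    {a : α} {b : β} {s : Set α} {t : Set β} (ha : a ∉ s) (hb : b ∉ t) (hab : f a = b)
    (h : f '' insert a s = insert b t) : f '' s = t := by
  rw [image_insert_eq, hab] at h
  calc f '' s = insert b (f '' s) \ {b} :=
        (insert_sdiff_self_of_notMem (hab ▸ hf.mem_set_image.not.mpr ha)).symm
    _ = t := by rw [h, insert_sdiff_self_of_notMem hb]

theorem abs_eq_abs_of_mul_eq_mul {R : Type*} [Field R] [LinearOrder R] [IsStrictOrderedRing R]
    {m u v x y : R} (hm : 0 < m) (hu : |u| ≤ m) (hv : |v| ≤ m)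
    (hux : u * x = m * y) (hvy : m * x = v * y) : |x| = |y| := by
  have hyx : m * |y| ≤ m * |x| :=
    calc m * |y| = |u| * |x| := by rw [← abs_mul, hux, abs_mul, abs_of_pos hm]
      _ ≤ m * |x| := mul_le_mul_of_nonneg_right hu (abs_nonneg x)
  have hxy : m * |x| ≤ m * |y| :=
    calc m * |x| = |v| * |y| := by rw [← abs_mul, ← hvy, abs_mul, abs_of_pos hm]
      _ ≤ m * |y| := mul_le_mul_of_nonneg_right hv (abs_nonneg y)
  exact le_antisymm (le_of_mul_le_mul_left hxy hm) (le_of_mul_le_mul_left hyx hm)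

theorem Fin.abs_val_sub_val_le {R : Type*} [Ring R] [LinearOrder R] [IsStrictOrderedRing R]
    {n : ℕ} (a b : Fin n) : |((a : ℕ) : R) - (b : ℕ)| ≤ ((n - 1 : ℕ) : R) := by
  have hle (i : Fin n) : ((i : ℕ) : R) ≤ ((n - 1 : ℕ) : R) := Nat.cast_le.mpr (by omega)
  exact abs_sub_le_of_nonneg_of_le (Nat.cast_nonneg _) (hle a) (Nat.cast_nonneg _) (hle b)

theorem Real.abs_eq_abs_of_log_eq_log {x y : ℝ} (hx : x ≠ 0) (hy : y ≠ 0) (h : log x = log y) :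
    |x| = |y| :=
  log_injOn_pos (abs_pos.mpr hx) (abs_pos.mpr hy) (by rw [log_abs, log_abs, h])

theorem abs_log_eq_abs_log_of_range_mul_pow_eq {q Q r : ℝ} (hq : q ≠ 0) (hr : r ≠ 0) {n : ℕ}
    (hn : 2 ≤ n) (h : range (fun i : Fin n => r * q ^ (i : ℕ)) = range (fun j : Fin n => Q ^ (j : ℕ))) :
    |Real.log q| = |Real.log Q| := by
  have hfirst : 0 < n := by omega
  have hlast : n - 1 < n := by omega
  have pow_mem_nodes (j : Fin n) : Q ^ (j : ℕ) ∈ range (fun i : Fin n => r * q ^ (i : ℕ)) :=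
    h ▸ mem_range_self j
  have node_mem_pows (i : Fin n) : r * q ^ (i : ℕ) ∈ range (fun j : Fin n => Q ^ (j : ℕ)) :=
    h ▸ mem_range_self i
  obtain ⟨a, ha⟩ := pow_mem_nodes ⟨0, hfirst⟩
  obtain ⟨b, hb⟩ := pow_mem_nodes ⟨n - 1, hlast⟩
  obtain ⟨d, hd⟩ := node_mem_pows ⟨0, hfirst⟩
  obtain ⟨c, hc⟩ := node_mem_pows ⟨n - 1, hlast⟩
  have log_node (k : ℕ) : Real.log (r * q ^ k) = Real.log r + k * Real.log q := by
    rw [Real.log_mul hr (pow_ne_zero _ hq), Real.log_pow]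
  replace ha := congrArg Real.log ha
  replace hb := congrArg Real.log hb
  replace hc := congrArg Real.log hc
  replace hd := congrArg Real.log hd
  simp only [log_node, Real.log_pow, pow_zero, mul_one, Real.log_one] at ha hb hc hd
  refine abs_eq_abs_of_mul_eq_mul (u := ((b : ℕ) : ℝ) - (a : ℕ)) (v := ((c : ℕ) : ℝ) - (d : ℕ))
    (Nat.cast_pos.mpr (by omega)) (Fin.abs_val_sub_val_le b a) (Fin.abs_val_sub_val_le c d)
    (by linarith) (by linarith)

theorem stmt_9_general (q Q : ℝ) (hq0 : q ≠ 0)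
    (hQ0 : Q ≠ 0) (hqQ : q ≠ Q)
    (n : ℕ) (hn : 2 ≤ n) (r : ℝ) (hr : r ≠ 0)
    (h : (fun y => r * y) '' (insert (0 : ℝ) (Set.range fun i : Fin n => q ^ (i : ℕ)))
        = insert (0 : ℝ) (Set.range fun i : Fin n => Q ^ (i : ℕ))) :
    Q = -q ∨ Q = q⁻¹ ∨ Q = -q⁻¹ := by
  have hnodes : range (fun i : Fin n => r * q ^ (i : ℕ)) = range (fun j : Fin n => Q ^ (j : ℕ)) := by
    have hzero_q : (0 : ℝ) ∉ range (fun i : Fin n => q ^ (i : ℕ)) := by simp [hq0]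
    have hzero_Q : (0 : ℝ) ∉ range (fun j : Fin n => Q ^ (j : ℕ)) := by simp [hQ0]
    rw [← image_eq_of_image_insert_eq_insert (mul_right_injective₀ hr) hzero_q hzero_Q
      (mul_zero r) h, ← range_comp]
    rfl
  rcases abs_eq_abs.mp (abs_log_eq_abs_log_of_range_mul_pow_eq hq0 hr hn hnodes) with hlog | hlog
  · rcases abs_eq_abs.mp (Real.abs_eq_abs_of_log_eq_log hq0 hQ0 hlog) with hQ | hQ
    · exact absurd hQ hqQ
    · exact Or.inl (by linarith)
  · have hlog_inv : Real.log Q = Real.log q⁻¹ := by rw [Real.log_inv]; linarith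
    exact Or.inr (abs_eq_abs.mp (Real.abs_eq_abs_of_log_eq_log hQ0 (inv_ne_zero hq0) hlog_inv))

/-- If a scale by `r ≠ 0` maps the node set `{0,1,q,…,q^{n-1}}` of `ₑD_n` onto the node
set `{0,1,Q,…,Q^{n-1}}`, then `Q = -q` or `Q = q⁻¹` or `Q = -q⁻¹`. -/
theorem stmt_9 (q Q : ℝ) (hq0 : q ≠ 0) (hq1 : q ≠ 1) (hqm1 : q ≠ -1)
    (hQ0 : Q ≠ 0) (hQ1 : Q ≠ 1) (hQm1 : Q ≠ -1) (hqQ : q ≠ Q)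
    (n : ℕ) (hn : 2 ≤ n) (r : ℝ) (hr : r ≠ 0)
    (h : (fun y => r * y) '' (insert (0 : ℝ) (Set.range fun i : Fin n => q ^ (i : ℕ)))
        = insert (0 : ℝ) (Set.range fun i : Fin n => Q ^ (i : ℕ))) :
    Q = -q ∨ Q = q⁻¹ ∨ Q = -q⁻¹ :=
  stmt_9_general q Q hq0 hQ0 hqQ n hn r hr h
end

section
/- Let $q \notin \{0,1,-1\}$ and $n \ge 1$. If there is a nonzero real $r$ with $r \cdot \{1,q,\ldots,q^n\} = \{1,Q,\ldots,Q^n\}$ as sets, where $Q \notin \{0,1,-1\}$ and $Q \neq q$, then $Q = -q$ or $Q = q^{-1}$ or $Q = -q^{-1}$. -/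
/-- If a scale by `r ≠ 0` maps the node set `{1,q,…,q^n}` of `ₑD̄_n` onto the node set
`{1,Q,…,Q^n}`, then `Q = -q` or `Q = q⁻¹` or `Q = -q⁻¹`. -/
theorem stmt_10 (q Q : ℝ) (hq0 : q ≠ 0) (hq1 : q ≠ 1) (hqm1 : q ≠ -1)
    (hQ0 : Q ≠ 0) (hQ1 : Q ≠ 1) (hQm1 : Q ≠ -1) (hQq : Q ≠ q)
    (n : ℕ) (hn : 1 ≤ n) (r : ℝ) (hr : r ≠ 0)
    (h : (fun y => r * y) '' (Set.range fun i : Fin (n + 1) => q ^ (i : ℕ))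
        = Set.range fun i : Fin (n + 1) => Q ^ (i : ℕ)) :
    Q = -q ∨ Q = q⁻¹ ∨ Q = -q⁻¹ := by
  have h1 : ∀ i : Fin (n + 1), ∃ j : Fin (n + 1), Q ^ (j : ℕ) = r * q ^ (i : ℕ) := by
    intro i
    have hmem : r * q ^ (i : ℕ)
        ∈ (fun y => r * y) '' (Set.range fun i : Fin (n + 1) => q ^ (i : ℕ)) :=
      ⟨q ^ (i : ℕ), ⟨i, rfl⟩, rfl⟩
    rw [h] at hmem
    obtain ⟨j, hj⟩ := hmem
    exact ⟨j, hj⟩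
  have h2 : ∀ j : Fin (n + 1), ∃ i : Fin (n + 1), r * q ^ (i : ℕ) = Q ^ (j : ℕ) := by
    intro j
    have hmem : Q ^ (j : ℕ) ∈ Set.range fun i : Fin (n + 1) => Q ^ (i : ℕ) := ⟨j, rfl⟩
    rw [← h] at hmem
    obtain ⟨x, ⟨i, rfl⟩, hx⟩ := hmem
    exact ⟨i, hx⟩
  obtain ⟨a, ha⟩ := h1 ⟨0, by omega⟩
  obtain ⟨b, hb⟩ := h1 ⟨1, by omega⟩
  obtain ⟨c, hc⟩ := h2 ⟨0, by omega⟩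
  obtain ⟨d, hd⟩ := h2 ⟨1, by omega⟩
  simp only [pow_zero, pow_one, mul_one] at ha hb hc hd
  -- q = Q ^ (b - a)
  have hqQ : q = Q ^ ((b : ℤ) - (a : ℤ)) := by
    have : Q ^ (b : ℕ) = Q ^ (a : ℕ) * q := by rw [ha, hb]
    have h' : q = Q ^ (b : ℕ) / Q ^ (a : ℕ) := by
      field_simp at this ⊢
      linarith [this]
    rw [h', zpow_sub₀ hQ0, zpow_natCast, zpow_natCast]
  -- Q = q ^ (d - c)
  have hQq' : Q = q ^ ((d : ℤ) - (c : ℤ)) := by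
    have h' : Q = q ^ (d : ℕ) / q ^ (c : ℕ) := by
      field_simp
      rw [← hd, mul_right_comm, hc, one_mul]
    rw [h', zpow_sub₀ hq0, zpow_natCast, zpow_natCast]
  set m : ℤ := (d : ℤ) - (c : ℤ) with hm
  set k : ℤ := (b : ℤ) - (a : ℤ) with hk
  have key : q ^ (m * k - 1) = 1 := by
    have : q = q ^ (m * k) := by
      rw [zpow_mul, ← hQq', ← hqQ]
    rw [zpow_sub₀ hq0, ← this, zpow_one, div_self hq0]
  have habs : |q| ^ (m * k - 1) = (1 : ℝ) := by
    have h' := map_zpow₀ (absHom : ℝ →*₀ ℝ) q (m * k - 1)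
    rw [show (absHom : ℝ →*₀ ℝ) q = |q| from rfl, show (absHom : ℝ →*₀ ℝ) (q ^ (m*k-1)) = |q ^ (m*k-1)| from rfl] at h'
    rw [← h', key, abs_one]
  have hlog : ((m * k - 1 : ℤ) : ℝ) * Real.log |q| = 0 := by
    rw [← Real.log_zpow, habs, Real.log_one]
  have hlogq : Real.log |q| ≠ 0 := by
    intro h0
    rcases Real.log_eq_zero.mp h0 with h' | h' | h'
    · exact hq0 (abs_eq_zero.mp h')
    · rcases abs_eq (by norm_num : (0:ℝ) ≤ 1) |>.mp h' with h'' | h''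
      · exact hq1 h''
      · exact hqm1 h''
    · nlinarith [abs_nonneg q]
  have hmk : m * k - 1 = 0 := by
    have := mul_eq_zero.mp hlog
    rcases this with h' | h'
    · exact_mod_cast h'
    · exact absurd h' hlogq
  have hmk1 : m * k = 1 := by omega
  rcases (Int.mul_eq_one_iff_eq_one_or_neg_one.mp hmk1) with ⟨hm1, _⟩ | ⟨hm1, _⟩
  · exfalso
    apply hQq
    rw [hQq', hm1, zpow_one]
  · right; left
    rw [hQq', hm1, zpow_neg, zpow_one]
end
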